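/- Let ξ and η be real numbers with ξ + ‖γ‖ > 0, η + ‖γ‖ > 0, and ξ + η + ‖γ‖ < 0. Then for every x ∈ ℝⁿ the integral K(x,ξ,η) = ∫_{ℝⁿ} ρ(x−y)^ξ (1+ρ(y))^η dy is finite and satisfies K(x,ξ,η) ≤ C(ξ,η,ℓ̲) (1+ρ(x))^{ξ+η+‖γ‖}, with C(ξ,η,ℓ̲) independent of x. -/

import Mathlib

open MeasureTheory Real Set
open scoped ENNReal

set_option linter.unusedVariables false

noncomputable section

namespace Semielliptic

/-- `σ(x) = Σ_k x_k^{2ℓ_k}` -/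
def sig {n : ℕ} (l : Fin n → ℕ) (x : Fin n → ℝ) : ℝ := ∑ k, x k ^ (2 * l k)

/-- `ℓ = max_k ℓ_k` -/
def lmax {n : ℕ} (l : Fin n → ℕ) : ℕ := Finset.univ.sup l

/-- the anisotropic length `ρ(x) = σ(x)^{1/(2ℓ)}` -/
def rho {n : ℕ} (l : Fin n → ℕ) (x : Fin n → ℝ) : ℝ :=
  sig l x ^ ((1 : ℝ) / (2 * (lmax l : ℝ)))

/-- `γ_k = ℓ/ℓ_k` -/
def gam {n : ℕ} (l : Fin n → ℕ) (k : Fin n) : ℝ := (lmax l : ℝ) / (l k : ℝ)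

/-- `‖γ‖ = Σ_k γ_k` -/
def gnorm {n : ℕ} (l : Fin n → ℕ) : ℝ := ∑ k, gam l k

/-- `α·γ = Σ_k α_k γ_k` -/
def dotg {n : ℕ} (l : Fin n → ℕ) (a : Fin n → ℕ) : ℝ := ∑ k, (a k : ℝ) * gam l k

/-- the partial derivative in the k-th coordinate direction -/
def pd {n : ℕ} {E : Type*} [NormedAddCommGroup E] [NormedSpace ℝ E] (k : Fin n)
    (f : (Fin n → ℝ) → E) : (Fin n → ℝ) → E :=
  fun x => fderiv ℝ f x (Pi.single k 1)

/-- the multi-index partial derivative `∂^α` -/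
def pdM {n : ℕ} {E : Type*} [NormedAddCommGroup E] [NormedSpace ℝ E] (a : Fin n → ℕ)
    (f : (Fin n → ℝ) → E) : (Fin n → ℝ) → E :=
  Fin.foldr n (fun k g => (pd k)^[a k] g) f

/-- the symbol `L(x) = Σ_{α·γ=ℓ} A_α (ix)^α` -/
def symb {n m : ℕ} {ι : Type} [Fintype ι] (l : Fin n → ℕ)
    (A : ι → Matrix (Fin m) (Fin m) ℂ) (mi : ι → Fin n → ℕ)
    (x : Fin n → ℝ) : Matrix (Fin m) (Fin m) ℂ :=
  ∑ i, (∏ k, (Complex.I * (x k : ℂ)) ^ (mi i k)) • A i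

/-- the Frobenius (Hilbert–Schmidt) norm of a matrix -/
def fro {m : ℕ} (M : Matrix (Fin m) (Fin m) ℂ) : ℝ :=
  Real.sqrt (∑ i, ∑ j, ‖M i j‖ ^ 2)

/-- the integrand `e^{ix·z}(iz)^β σ(z) e^{-tσ(z)} L(z)⁻¹` -/
def jker {n m : ℕ} {ι : Type} [Fintype ι] (l : Fin n → ℕ)
    (A : ι → Matrix (Fin m) (Fin m) ℂ) (mi : ι → Fin n → ℕ)
    (b : Fin n → ℕ) (x : Fin n → ℝ) (t : ℝ) (z : Fin n → ℝ) : Matrix (Fin m) (Fin m) ℂ :=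
  (Complex.exp (Complex.I * ((∑ k, x k * z k : ℝ) : ℂ)) *
      (∏ k, (Complex.I * (z k : ℂ)) ^ (b k)) *
      ((sig l z : ℝ) : ℂ) * ((Real.exp (-(t * sig l z)) : ℝ) : ℂ)) • (symb l A mi z)⁻¹

/-- `J_β(x,t) = ∫_{ℝⁿ} e^{ix·z}(iz)^β σ(z) e^{-tσ(z)} L(z)⁻¹ dz`, computed entrywise -/
def Jmat {n m : ℕ} {ι : Type} [Fintype ι] (l : Fin n → ℕ)
    (A : ι → Matrix (Fin m) (Fin m) ℂ) (mi : ι → Fin n → ℕ)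
    (b : Fin n → ℕ) (x : Fin n → ℝ) (t : ℝ) : Matrix (Fin m) (Fin m) ℂ :=
  Matrix.of fun i j => ∫ z : Fin n → ℝ, jker l A mi b x t z i j

/-- `F_β(x) = (2π)^{-n} ∫_0^∞ J_β(x,t) dt`, computed entrywise -/
def Fmat {n m : ℕ} {ι : Type} [Fintype ι] (l : Fin n → ℕ)
    (A : ι → Matrix (Fin m) (Fin m) ℂ) (mi : ι → Fin n → ℕ)
    (b : Fin n → ℕ) (x : Fin n → ℝ) : Matrix (Fin m) (Fin m) ℂ :=
  Matrix.of fun i j =>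
    ((((2 * Real.pi) ^ n)⁻¹ : ℝ) : ℂ) * ∫ t in Ioi (0 : ℝ), Jmat l A mi b x t i j

/-- `v` is the weak derivative `∂^α u`: tested against scalar test functions. -/
def IsWeakDeriv {n m : ℕ} (a : Fin n → ℕ) (u v : (Fin n → ℝ) → Fin m → ℂ) : Prop :=
  ∀ φ : (Fin n → ℝ) → ℝ, ContDiff ℝ (⊤ : ℕ∞) φ → HasCompactSupport φ →
    ∫ x : Fin n → ℝ, pdM a φ x • u x
      = ((-1 : ℝ) ^ (∑ k, a k)) • ∫ x : Fin n → ℝ, φ x • v x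

open Classical in
/-- the (finite) set of multi-indices with `α·γ ≤ r` -/
def idxSet {n : ℕ} (l : Fin n → ℕ) (r : ℝ) : Finset (Fin n → ℕ) :=
  (Finset.image (fun f : Fin n → Fin (⌈r⌉₊ + 1) => fun k => (f k : ℕ)) Finset.univ).filter
    (fun a => dotg l a ≤ r)

/-- `𝓛u = Σ_{α·γ=ℓ} A_α ∂^α u`, computed from the given family of (weak) derivatives of `u` -/
def Lop {n m : ℕ} {ι : Type} [Fintype ι] (A : ι → Matrix (Fin m) (Fin m) ℂ)
    (mi : ι → Fin n → ℕ) (du : (Fin n → ℕ) → (Fin n → ℝ) → Fin m → ℂ)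
    (x : Fin n → ℝ) : Fin m → ℂ :=
  ∑ i, (A i).mulVec (du (mi i) x)

/-- `𝓛φ` for smooth `φ` (classical derivatives) -/
def LopC {n m : ℕ} {ι : Type} [Fintype ι] (A : ι → Matrix (Fin m) (Fin m) ℂ)
    (mi : ι → Fin n → ℕ) (φ : (Fin n → ℝ) → Fin m → ℂ) (x : Fin n → ℝ) : Fin m → ℂ :=
  ∑ i, (A i).mulVec (pdM (mi i) φ x)

/-- the formal adjoint `𝓛*φ = Σ (-1)^{|α|} A_α* ∂^α φ` on smooth functions -/
def LopAdj {n m : ℕ} {ι : Type} [Fintype ι] (A : ι → Matrix (Fin m) (Fin m) ℂ)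
    (mi : ι → Fin n → ℕ) (φ : (Fin n → ℝ) → Fin m → ℂ) (x : Fin n → ℝ) : Fin m → ℂ :=
  ∑ i, ((-1 : ℂ) ^ (∑ k, mi i k)) • (A i).conjTranspose.mulVec (pdM (mi i) φ x)

/-- the pairing `u·v = v* u` in `ℂ^m` -/
def pairc {m : ℕ} (u v : Fin m → ℂ) : ℂ := ∑ j, u j * (starRingEnd ℂ) (v j)

/-!
With `R = 1 + ρ(x)`, split `ℝⁿ` into the regions `ρ(x-y) ≤ R/2`, then `ρ(x-y) > R/2` and
`1 + ρ(y) ≤ 2R`, then `1 + ρ(y) > 2R`. By the triangle inequality for `ρ` the integrand is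
bounded there by `(R/2)^η ρ(x-y)^ξ`, `(R/2)^ξ (1+ρ(y))^η` and `2^{-ξ} (1+ρ(y))^{ξ+η}`.

The anisotropic dilations `x ↦ (t^{γ_k} x_k)_k` scale `ρ` by `t` and Lebesgue measure by
`t^{‖γ‖}`, so `|{ρ ≤ r}| = c r^{‖γ‖}`. Summing over dyadic shells, `∫_{ρ ≤ r} ρ^θ ≲ r^{θ+‖γ‖}`
when `θ + ‖γ‖ > 0` and `∫_{ρ > r} ρ^θ ≲ r^{θ+‖γ‖}` when `θ + ‖γ‖ < 0`; hence each region
contributes `≲ R^{ξ+η+‖γ‖}`.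
-/

lemma tsum_ofReal_mul_geometric {K q : ℝ} (hK : 0 ≤ K) (hq₀ : 0 ≤ q) (hq₁ : q < 1) :
    ∑' n : ℕ, ENNReal.ofReal (K * q ^ n) = ENNReal.ofReal (K / (1 - q)) := by
  rw [← ENNReal.ofReal_tsum_of_nonneg (fun n => by positivity)
    ((summable_geometric_of_lt_one hq₀ hq₁).mul_left K), tsum_mul_left,
    tsum_geometric_of_lt_one hq₀ hq₁, div_eq_mul_inv]

lemma exists_inv_two_pow_mul_le_and_le {t R : ℝ} (ht : 0 < t) (htR : t ≤ R) :
    ∃ n : ℕ, R * 2⁻¹ ^ (n + 1) ≤ t ∧ t ≤ R * 2⁻¹ ^ n := by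
  obtain ⟨n, hn, hn'⟩ := exists_nat_pow_near ((one_le_div ht).2 htR) one_lt_two
  rw [le_div_iff₀ ht] at hn
  rw [div_lt_iff₀ ht] at hn'
  refine ⟨n, ?_, ?_⟩
  · rw [inv_pow, ← div_eq_mul_inv, div_le_iff₀ (by positivity)]
    linarith
  · rw [inv_pow, ← div_eq_mul_inv, le_div_iff₀ (by positivity)]
    linarith

lemma exists_two_pow_mul_le_and_le {t R : ℝ} (hR : 0 < R) (hRt : R ≤ t) :
    ∃ n : ℕ, R * 2 ^ n ≤ t ∧ t ≤ R * 2 ^ (n + 1) := by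
  obtain ⟨n, hn, hn'⟩ := exists_nat_pow_near ((one_le_div hR).2 hRt) one_lt_two
  rw [le_div_iff₀ hR] at hn
  rw [div_lt_iff₀ hR] at hn'
  exact ⟨n, by linarith, by linarith⟩

section Growth

variable {α : Type*} [MeasurableSpace α] {μ : Measure α} {f : α → ℝ} {c d θ : ℝ}
  (hμ : ∀ r > 0, μ {y | f y ≤ r} ≤ ENNReal.ofReal (c * r ^ d))
include hμ

lemma setLIntegral_rpow_shell_le (hθ : θ ≤ 0) {R h : ℝ} (hR : 0 < R) (hh : 0 < h) (m k : ℕ) :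
    ∫⁻ y in {y | R * h ^ m ≤ f y ∧ f y ≤ R * h ^ k}, ENNReal.ofReal (f y ^ θ) ∂μ
      ≤ ENNReal.ofReal (c * R ^ (θ + d) * (h ^ θ) ^ m * (h ^ d) ^ k) := by
  have hpow (j : ℕ) (t : ℝ) : (R * h ^ j) ^ t = R ^ t * (h ^ t) ^ j := by
    rw [Real.mul_rpow hR.le (by positivity), Real.rpow_pow_comm hh.le]
  calc ∫⁻ y in {y | R * h ^ m ≤ f y ∧ f y ≤ R * h ^ k}, ENNReal.ofReal (f y ^ θ) ∂μ
      ≤ ∫⁻ _ in {y | R * h ^ m ≤ f y ∧ f y ≤ R * h ^ k}, ENNReal.ofReal ((R * h ^ m) ^ θ) ∂μ :=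
        setLIntegral_mono measurable_const fun y hy =>
          ENNReal.ofReal_le_ofReal (Real.rpow_le_rpow_of_nonpos (by positivity) hy.1 hθ)
    _ ≤ ENNReal.ofReal ((R * h ^ m) ^ θ) * ENNReal.ofReal (c * (R * h ^ k) ^ d) := by
        rw [setLIntegral_const]
        gcongr
        exact (measure_mono fun y hy => hy.2).trans (hμ _ (by positivity))
    _ = ENNReal.ofReal (c * R ^ (θ + d) * (h ^ θ) ^ m * (h ^ d) ^ k) := by
        rw [← ENNReal.ofReal_mul (by positivity), hpow, hpow, Real.rpow_add hR]
        congr 1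
        ring

lemma exists_setLIntegral_rpow_le_of_le (hf : ∀ y, 0 ≤ f y) (hc : 0 ≤ c) (hθ : θ < 0)
    (hθd : 0 < θ + d) :
    ∃ C, 0 ≤ C ∧ ∀ R > 0,
      ∫⁻ y in {y | f y ≤ R}, ENNReal.ofReal (f y ^ θ) ∂μ ≤ ENNReal.ofReal (C * R ^ (θ + d)) := by
  have hq₀ : 0 ≤ (2⁻¹ : ℝ) ^ (θ + d) := by positivity
  have hq₁ : (2⁻¹ : ℝ) ^ (θ + d) < 1 := Real.rpow_lt_one (by norm_num) (by norm_num) hθd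
  refine ⟨c * 2⁻¹ ^ θ / (1 - 2⁻¹ ^ (θ + d)), div_nonneg (by positivity) (by linarith),
    fun R (hR : 0 < R) => ?_⟩
  set S : ℕ → Set α := fun n => {y | R * 2⁻¹ ^ (n + 1) ≤ f y ∧ f y ≤ R * 2⁻¹ ^ n}
  have hcover : {y | f y ≤ R} ⊆ {y | f y = 0} ∪ ⋃ n, S n := fun y hy =>
    (hf y).eq_or_lt.imp Eq.symm fun hpos =>
      mem_iUnion.2 (exists_inv_two_pow_mul_le_and_le hpos hy)
  -- `0 ^ θ = 0` for `θ ≠ 0`, so the zero set of `f` does not contribute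
  have hzero : ∫⁻ y in {y | f y = 0}, ENNReal.ofReal (f y ^ θ) ∂μ ≤ 0 :=
    (setLIntegral_mono measurable_const fun y (hy : f y = 0) => by
      rw [hy, Real.zero_rpow hθ.ne, ENNReal.ofReal_zero]).trans_eq lintegral_zero
  calc ∫⁻ y in {y | f y ≤ R}, ENNReal.ofReal (f y ^ θ) ∂μ
      ≤ ∫⁻ y in {y | f y = 0}, ENNReal.ofReal (f y ^ θ) ∂μ
          + ∑' n, ∫⁻ y in S n, ENNReal.ofReal (f y ^ θ) ∂μ :=
        (lintegral_mono_set hcover).trans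
          ((lintegral_union_le _ _ _).trans (by gcongr; exact lintegral_iUnion_le _ _))
    _ ≤ 0 + ∑' n : ℕ, ENNReal.ofReal (c * 2⁻¹ ^ θ * R ^ (θ + d) * (2⁻¹ ^ (θ + d)) ^ n) := by
        gcongr with n
        refine (setLIntegral_rpow_shell_le hμ hθ.le hR (by norm_num) _ _).trans_eq ?_
        rw [Real.rpow_add (by norm_num : (0 : ℝ) < 2⁻¹), mul_pow]
        congr 1
        ring
    _ = ENNReal.ofReal (c * 2⁻¹ ^ θ / (1 - 2⁻¹ ^ (θ + d)) * R ^ (θ + d)) := by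
        rw [zero_add, tsum_ofReal_mul_geometric (by positivity) hq₀ hq₁]
        congr 1
        ring

lemma exists_setLIntegral_rpow_le_of_lt (hc : 0 ≤ c) (hθ : θ < 0) (hθd : θ + d < 0) :
    ∃ C, 0 ≤ C ∧ ∀ R > 0,
      ∫⁻ y in {y | R < f y}, ENNReal.ofReal (f y ^ θ) ∂μ ≤ ENNReal.ofReal (C * R ^ (θ + d)) := by
  have hq₀ : 0 ≤ (2 : ℝ) ^ (θ + d) := by positivity
  have hq₁ : (2 : ℝ) ^ (θ + d) < 1 := Real.rpow_lt_one_of_one_lt_of_neg one_lt_two hθd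
  refine ⟨c * 2 ^ d / (1 - 2 ^ (θ + d)), div_nonneg (by positivity) (by linarith),
    fun R (hR : 0 < R) => ?_⟩
  set S : ℕ → Set α := fun n => {y | R * 2 ^ n ≤ f y ∧ f y ≤ R * 2 ^ (n + 1)}
  have hcover : {y | R < f y} ⊆ ⋃ n, S n := fun y hy =>
    mem_iUnion.2 (exists_two_pow_mul_le_and_le hR (le_of_lt hy))
  calc ∫⁻ y in {y | R < f y}, ENNReal.ofReal (f y ^ θ) ∂μ
      ≤ ∑' n, ∫⁻ y in S n, ENNReal.ofReal (f y ^ θ) ∂μ :=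
        (lintegral_mono_set hcover).trans (lintegral_iUnion_le _ _)
    _ ≤ ∑' n : ℕ, ENNReal.ofReal (c * 2 ^ d * R ^ (θ + d) * ((2 : ℝ) ^ (θ + d)) ^ n) := by
        gcongr with n
        refine (setLIntegral_rpow_shell_le hμ hθ.le hR two_pos _ _).trans_eq ?_
        rw [Real.rpow_add two_pos, mul_pow]
        congr 1
        ring
    _ = ENNReal.ofReal (c * 2 ^ d / (1 - 2 ^ (θ + d)) * R ^ (θ + d)) := by
        rw [tsum_ofReal_mul_geometric (by positivity) hq₀ hq₁]
        congr 1
        ring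

end Growth

section Rho

variable {n : ℕ} {l : Fin n → ℕ}

lemma sig_nonneg (x : Fin n → ℝ) : 0 ≤ sig l x :=
  Finset.sum_nonneg fun k _ => (even_two_mul (l k)).pow_nonneg _

lemma rho_nonneg (x : Fin n → ℝ) : 0 ≤ rho l x := Real.rpow_nonneg (sig_nonneg x) _

@[fun_prop]
lemma measurable_rho : Measurable (rho l) := by
  unfold rho sig
  fun_prop

lemma le_lmax (k : Fin n) : l k ≤ lmax l := Finset.le_sup (Finset.mem_univ k)

lemma lmax_pos (hn : 0 < n) (hl : ∀ k, 0 < l k) : 0 < lmax l :=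
  (hl ⟨0, hn⟩).trans_le (le_lmax _)

lemma rho_neg (x : Fin n → ℝ) : rho l (-x) = rho l x := by
  simp only [rho, sig, Pi.neg_apply, (even_two_mul _).neg_pow]

lemma rho_eq_sum_rpow (hL : 0 < lmax l) (x : Fin n → ℝ) :
    rho l x = (∑ k, (|x k| ^ ((l k : ℝ) / lmax l)) ^ (2 * (lmax l : ℝ)))
      ^ (1 / (2 * (lmax l : ℝ))) := by
  have hL' : (lmax l : ℝ) ≠ 0 := by positivity
  rw [rho, sig]
  congr 1
  refine Finset.sum_congr rfl fun k _ => ?_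
  rw [← Real.rpow_mul (abs_nonneg _), ← (even_two_mul (l k)).pow_abs, ← Real.rpow_natCast]
  congr 1
  field_simp
  push_cast
  ring

/-- Each entry `|x_k|^{ℓ_k/ℓ}` is subadditive in `x` since `ℓ_k/ℓ ≤ 1`; Minkowski's inequality
in `ℓ^{2ℓ}` concludes. -/
lemma rho_add_le (hL : 0 < lmax l) (x y : Fin n → ℝ) : rho l (x + y) ≤ rho l x + rho l y := by
  set L : ℝ := (lmax l : ℝ)
  have hL₁ : (1 : ℝ) ≤ L := Nat.one_le_cast.2 hL
  set u : (Fin n → ℝ) → Fin n → ℝ := fun z k => |z k| ^ ((l k : ℝ) / L)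
  have hu_add (k : Fin n) : u (x + y) k ≤ u x k + u y k := by
    have he : (l k : ℝ) / L ≤ 1 :=
      div_le_one_of_le₀ (Nat.cast_le.2 (le_lmax (l := l) k)) (by positivity)
    calc u (x + y) k ≤ (|x k| + |y k|) ^ ((l k : ℝ) / L) :=
          Real.rpow_le_rpow (abs_nonneg _) (abs_add_le _ _) (by positivity)
      _ ≤ u x k + u y k :=
          Real.rpow_add_le_add_rpow (abs_nonneg _) (abs_nonneg _) (by positivity) he
  simp only [rho_eq_sum_rpow hL]
  calc (∑ k, u (x + y) k ^ (2 * L)) ^ (1 / (2 * L))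
      ≤ (∑ k, (u x k + u y k) ^ (2 * L)) ^ (1 / (2 * L)) := by
        gcongr with k
        exact hu_add k
    _ ≤ (∑ k, u x k ^ (2 * L)) ^ (1 / (2 * L)) + (∑ k, u y k ^ (2 * L)) ^ (1 / (2 * L)) :=
        Real.Lp_add_le_of_nonneg _ (by linarith) (fun k _ => by positivity)
          (fun k _ => by positivity)

lemma abs_le_one_of_rho_le_one (hl : ∀ k, 0 < l k) {y : Fin n → ℝ} (hy : rho l y ≤ 1)
    (k : Fin n) : |y k| ≤ 1 := by
  by_contra! hk
  have hL : (0 : ℝ) < lmax l := by exact_mod_cast (hl k).trans_le (le_lmax k)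
  have hsig : 1 < sig l y := by
    calc 1 < |y k| ^ (2 * l k) := one_lt_pow₀ hk (by have := hl k; omega)
      _ = y k ^ (2 * l k) := (even_two_mul (l k)).pow_abs _
      _ ≤ sig l y := Finset.single_le_sum (f := fun j => y j ^ (2 * l j))
          (fun j _ => (even_two_mul (l j)).pow_nonneg _) (Finset.mem_univ k)
  exact absurd (Real.one_lt_rpow hsig (by positivity)) (not_lt.2 hy)

lemma volume_setOf_rho_le_one_lt_top (hl : ∀ k, 0 < l k) :
    volume {y : Fin n → ℝ | rho l y ≤ 1} < ⊤ := by
  refine (Metric.isBounded_closedBall (x := 0) (r := 1).subset fun y hy => ?_).measure_lt_top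
  rw [mem_closedBall_zero_iff, pi_norm_le_iff_of_nonneg zero_le_one]
  exact fun k => (Real.norm_eq_abs _).trans_le (abs_le_one_of_rho_le_one hl hy k)

def dilation (l : Fin n → ℕ) (t : ℝ) : (Fin n → ℝ) →ₗ[ℝ] (Fin n → ℝ) :=
  Matrix.toLin' (Matrix.diagonal fun k => t ^ gam l k)

lemma dilation_apply (t : ℝ) (x : Fin n → ℝ) (k : Fin n) :
    dilation l t x k = t ^ gam l k * x k := by
  simp [dilation, Matrix.toLin'_apply, Matrix.mulVec_diagonal]

lemma det_dilation {t : ℝ} (ht : 0 < t) : LinearMap.det (dilation l t) = t ^ gnorm l := by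
  rw [dilation, LinearMap.det_toLin', Matrix.det_diagonal, gnorm, Real.rpow_sum_of_pos ht]

lemma sig_dilation (hl : ∀ k, 0 < l k) {t : ℝ} (ht : 0 < t) (x : Fin n → ℝ) :
    sig l (dilation l t x) = t ^ (2 * (lmax l : ℝ)) * sig l x := by
  rw [sig, sig, Finset.mul_sum]
  refine Finset.sum_congr rfl fun k _ => ?_
  have hlk : (l k : ℝ) ≠ 0 := by exact_mod_cast (hl k).ne'
  rw [dilation_apply, mul_pow, ← Real.rpow_natCast (t ^ gam l k), ← Real.rpow_mul ht.le, gam]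
  congr 2
  push_cast
  field_simp

lemma rho_dilation (hl : ∀ k, 0 < l k) (hL : 0 < lmax l) {t : ℝ} (ht : 0 < t)
    (x : Fin n → ℝ) : rho l (dilation l t x) = t * rho l x := by
  have hL' : (lmax l : ℝ) ≠ 0 := by positivity
  rw [rho, sig_dilation hl ht, Real.mul_rpow (by positivity) (sig_nonneg x),
    ← Real.rpow_mul ht.le, mul_one_div_cancel (by positivity), Real.rpow_one, rho]

lemma volume_setOf_rho_le (hl : ∀ k, 0 < l k) (hL : 0 < lmax l) {r : ℝ} (hr : 0 < r) :
    volume {y : Fin n → ℝ | rho l y ≤ r}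
      = ENNReal.ofReal ((volume {y : Fin n → ℝ | rho l y ≤ 1}).toReal * r ^ gnorm l) := by
  have hpre : {y : Fin n → ℝ | rho l y ≤ r} = dilation l r⁻¹ ⁻¹' {y | rho l y ≤ 1} := by
    ext y
    simp [rho_dilation hl hL (inv_pos.2 hr), inv_mul_le_iff₀ hr]
  rw [hpre, Measure.addHaar_preimage_linearMap _ (by rw [det_dilation (inv_pos.2 hr)]; positivity),
    det_dilation (inv_pos.2 hr), Real.inv_rpow hr.le, inv_inv, abs_of_pos (by positivity),
    ENNReal.ofReal_mul ENNReal.toReal_nonneg,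
    ENNReal.ofReal_toReal (volume_setOf_rho_le_one_lt_top hl).ne, mul_comm]

lemma volume_setOf_one_add_rho_le_le (hl : ∀ k, 0 < l k) (hL : 0 < lmax l) {r : ℝ}
    (hr : 0 < r) :
    volume {y : Fin n → ℝ | 1 + rho l y ≤ r}
      ≤ ENNReal.ofReal ((volume {y : Fin n → ℝ | rho l y ≤ 1}).toReal * r ^ gnorm l) :=
  (measure_mono fun y (hy : 1 + rho l y ≤ r) => show rho l y ≤ r by linarith).trans
    (volume_setOf_rho_le hl hL hr).le

end Rho

lemma lintegral_le_setLIntegral_add_add {α : Type*} [MeasurableSpace α] {μ : Measure α}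
    {s t u : Set α} (h : univ ⊆ s ∪ t ∪ u) (f : α → ℝ≥0∞) :
    ∫⁻ a, f a ∂μ ≤ (∫⁻ a in s, f a ∂μ) + (∫⁻ a in t, f a ∂μ) + ∫⁻ a in u, f a ∂μ := by
  rw [← setLIntegral_univ]
  refine (lintegral_mono_set h).trans ((lintegral_union_le _ _ _).trans ?_)
  gcongr
  exact lintegral_union_le _ _ _

lemma integrable_and_integral_le_of_lintegral_le {α : Type*} [MeasurableSpace α]
    {μ : Measure α} {F : α → ℝ} {B : ℝ} (hFm : AEStronglyMeasurable F μ) (hF : ∀ a, 0 ≤ F a)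
    (hB : 0 ≤ B) (h : ∫⁻ a, ENNReal.ofReal (F a) ∂μ ≤ ENNReal.ofReal B) :
    Integrable F μ ∧ ∫ a, F a ∂μ ≤ B := by
  refine ⟨⟨hFm, (hasFiniteIntegral_iff_ofReal (ae_of_all _ hF)).2
    (h.trans_lt ENNReal.ofReal_lt_top)⟩, ?_⟩
  rw [integral_eq_lintegral_of_nonneg_ae (ae_of_all _ hF) hFm]
  exact ENNReal.toReal_le_of_le_ofReal hB h

section Kernel

variable {n : ℕ} {l : Fin n → ℕ} {ξ η C : ℝ}

lemma setLIntegral_kernel_near_le (hL : 0 < lmax l) (hη : η ≤ 0)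
    (hC : ∀ R > 0, ∫⁻ y in {y | rho l y ≤ R}, ENNReal.ofReal (rho l y ^ ξ)
      ≤ ENNReal.ofReal (C * R ^ (ξ + gnorm l)))
    (x : Fin n → ℝ) :
    ∫⁻ y in {y | rho l (x - y) ≤ (1 + rho l x) / 2},
        ENNReal.ofReal (rho l (x - y) ^ ξ * (1 + rho l y) ^ η)
      ≤ ENNReal.ofReal (C / 2 ^ (ξ + η + gnorm l) * (1 + rho l x) ^ (ξ + η + gnorm l)) := by
  set r := (1 + rho l x) / 2 with hr_def
  have hr : 0 < r := by linarith [rho_nonneg (l := l) x]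
  have hbound (y : Fin n → ℝ) (hy : rho l (x - y) ≤ r) :
      ENNReal.ofReal (rho l (x - y) ^ ξ * (1 + rho l y) ^ η)
        ≤ ENNReal.ofReal (r ^ η) * ENNReal.ofReal (rho l (x - y) ^ ξ) := by
    have htri : rho l x ≤ rho l (x - y) + rho l y := by
      simpa using rho_add_le hL (x - y) y
    rw [← ENNReal.ofReal_mul (Real.rpow_nonneg hr.le _), mul_comm]
    exact ENNReal.ofReal_le_ofReal (mul_le_mul_of_nonneg_right
      (Real.rpow_le_rpow_of_nonpos hr (by linarith) hη) (Real.rpow_nonneg (rho_nonneg _) _))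
  calc ∫⁻ y in {y | rho l (x - y) ≤ r}, ENNReal.ofReal (rho l (x - y) ^ ξ * (1 + rho l y) ^ η)
      ≤ ∫⁻ y in {y | rho l (x - y) ≤ r},
          ENNReal.ofReal (r ^ η) * ENNReal.ofReal (rho l (x - y) ^ ξ) :=
        setLIntegral_mono (by fun_prop) hbound
    _ = ENNReal.ofReal (r ^ η) * ∫⁻ z in {z | rho l z ≤ r}, ENNReal.ofReal (rho l z ^ ξ) := by
        rw [lintegral_const_mul' _ _ ENNReal.ofReal_ne_top]
        congr 1
        exact (Measure.measurePreserving_sub_left volume x).setLIntegral_comp_preimage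
          (f := fun z => ENNReal.ofReal (rho l z ^ ξ))
          (measurableSet_le measurable_rho measurable_const) (by fun_prop)
    _ ≤ ENNReal.ofReal (r ^ η) * ENNReal.ofReal (C * r ^ (ξ + gnorm l)) := by
        gcongr
        exact hC r hr
    _ = ENNReal.ofReal (C / 2 ^ (ξ + η + gnorm l) * (1 + rho l x) ^ (ξ + η + gnorm l)) := by
        rw [← ENNReal.ofReal_mul (Real.rpow_nonneg hr.le _), mul_left_comm, ← Real.rpow_add hr,
          show η + (ξ + gnorm l) = ξ + η + gnorm l by ring,
          Real.div_rpow (by linarith [rho_nonneg (l := l) x]) zero_le_two]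
        congr 1
        ring

lemma setLIntegral_kernel_middle_le (hξ : ξ ≤ 0)
    (hC : ∀ R > 0, ∫⁻ y in {y | 1 + rho l y ≤ R}, ENNReal.ofReal ((1 + rho l y) ^ η)
      ≤ ENNReal.ofReal (C * R ^ (η + gnorm l)))
    (x : Fin n → ℝ) :
    ∫⁻ y in {y | (1 + rho l x) / 2 < rho l (x - y) ∧ 1 + rho l y ≤ 2 * (1 + rho l x)},
        ENNReal.ofReal (rho l (x - y) ^ ξ * (1 + rho l y) ^ η)
      ≤ ENNReal.ofReal (C * 2 ^ (η + gnorm l) / 2 ^ ξ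
          * (1 + rho l x) ^ (ξ + η + gnorm l)) := by
  set R := 1 + rho l x
  have hR : 0 < R := by linarith [rho_nonneg (l := l) x]
  have hbound (y : Fin n → ℝ) (hy : R / 2 < rho l (x - y) ∧ 1 + rho l y ≤ 2 * R) :
      ENNReal.ofReal (rho l (x - y) ^ ξ * (1 + rho l y) ^ η)
        ≤ ENNReal.ofReal ((R / 2) ^ ξ) * ENNReal.ofReal ((1 + rho l y) ^ η) := by
    rw [← ENNReal.ofReal_mul (by positivity)]
    exact ENNReal.ofReal_le_ofReal (mul_le_mul_of_nonneg_right
      (Real.rpow_le_rpow_of_nonpos (by positivity) hy.1.le hξ)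
      (Real.rpow_nonneg (by linarith [rho_nonneg (l := l) y]) _))
  calc ∫⁻ y in {y | R / 2 < rho l (x - y) ∧ 1 + rho l y ≤ 2 * R},
        ENNReal.ofReal (rho l (x - y) ^ ξ * (1 + rho l y) ^ η)
      ≤ ∫⁻ y in {y | 1 + rho l y ≤ 2 * R},
          ENNReal.ofReal ((R / 2) ^ ξ) * ENNReal.ofReal ((1 + rho l y) ^ η) :=
        (setLIntegral_mono (by fun_prop) hbound).trans (lintegral_mono_set fun y hy => hy.2)
    _ ≤ ENNReal.ofReal ((R / 2) ^ ξ) * ENNReal.ofReal (C * (2 * R) ^ (η + gnorm l)) := by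
        rw [lintegral_const_mul' _ _ ENNReal.ofReal_ne_top]
        gcongr
        exact hC _ (by positivity)
    _ = ENNReal.ofReal (C * 2 ^ (η + gnorm l) / 2 ^ ξ * R ^ (ξ + η + gnorm l)) := by
        rw [← ENNReal.ofReal_mul (by positivity), Real.div_rpow hR.le zero_le_two,
          Real.mul_rpow zero_le_two hR.le, add_assoc, Real.rpow_add hR ξ (η + gnorm l)]
        congr 1
        field_simp

lemma setLIntegral_kernel_far_le (hL : 0 < lmax l) (hξ : ξ ≤ 0)
    (hC : ∀ R > 0, ∫⁻ y in {y | R < 1 + rho l y}, ENNReal.ofReal ((1 + rho l y) ^ (ξ + η))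
      ≤ ENNReal.ofReal (C * R ^ (ξ + η + gnorm l)))
    (x : Fin n → ℝ) :
    ∫⁻ y in {y | 2 * (1 + rho l x) < 1 + rho l y},
        ENNReal.ofReal (rho l (x - y) ^ ξ * (1 + rho l y) ^ η)
      ≤ ENNReal.ofReal (C * 2 ^ (ξ + η + gnorm l) / 2 ^ ξ
          * (1 + rho l x) ^ (ξ + η + gnorm l)) := by
  set R := 1 + rho l x
  have hR : 0 < R := by linarith [rho_nonneg (l := l) x]
  have hbound (y : Fin n → ℝ) (hy : 2 * R < 1 + rho l y) :
      ENNReal.ofReal (rho l (x - y) ^ ξ * (1 + rho l y) ^ η)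
        ≤ ENNReal.ofReal ((2 ^ ξ)⁻¹) * ENNReal.ofReal ((1 + rho l y) ^ (ξ + η)) := by
    have hy₀ : 0 < 1 + rho l y := by linarith
    have htri := rho_add_le hL (y - x) x
    rw [sub_add_cancel, ← neg_sub, rho_neg] at htri
    rw [← ENNReal.ofReal_mul (by positivity), Real.rpow_add hy₀, ← mul_assoc, inv_mul_eq_div,
      ← Real.div_rpow hy₀.le zero_le_two]
    exact ENNReal.ofReal_le_ofReal (mul_le_mul_of_nonneg_right
      (Real.rpow_le_rpow_of_nonpos (by positivity) (by linarith) hξ) (by positivity))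
  calc ∫⁻ y in {y | 2 * R < 1 + rho l y}, ENNReal.ofReal (rho l (x - y) ^ ξ * (1 + rho l y) ^ η)
      ≤ ∫⁻ y in {y | 2 * R < 1 + rho l y},
          ENNReal.ofReal ((2 ^ ξ)⁻¹) * ENNReal.ofReal ((1 + rho l y) ^ (ξ + η)) :=
        setLIntegral_mono (by fun_prop) hbound
    _ ≤ ENNReal.ofReal ((2 ^ ξ)⁻¹) * ENNReal.ofReal (C * (2 * R) ^ (ξ + η + gnorm l)) := by
        rw [lintegral_const_mul' _ _ ENNReal.ofReal_ne_top]
        gcongr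
        exact hC _ (by positivity)
    _ = ENNReal.ofReal (C * 2 ^ (ξ + η + gnorm l) / 2 ^ ξ * R ^ (ξ + η + gnorm l)) := by
        rw [← ENNReal.ofReal_mul (by positivity), Real.mul_rpow zero_le_two hR.le]
        congr 1
        field_simp

end Kernel

lemma exists_lintegral_kernel_le {n : ℕ} {l : Fin n → ℕ} {ξ η : ℝ} (hl : ∀ k, 0 < l k)
    (hL : 0 < lmax l) (hξ : 0 < ξ + gnorm l) (hη : 0 < η + gnorm l)
    (hξη : ξ + η + gnorm l < 0) :
    ∃ K, 0 < K ∧ ∀ x : Fin n → ℝ,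
      ∫⁻ y, ENNReal.ofReal (rho l (x - y) ^ ξ * (1 + rho l y) ^ η)
        ≤ ENNReal.ofReal (K * (1 + rho l x) ^ (ξ + η + gnorm l)) := by
  have hξ₀ : ξ < 0 := by linarith
  have hη₀ : η < 0 := by linarith
  have hgrowth (r : ℝ) (hr : 0 < r) := (volume_setOf_rho_le hl hL hr).le
  -- The `y`-integrals are taken in `1 + ρ(y)` rather than `ρ(y)`: the bound `(1 + ρ)^η ≤ ρ^η`
  -- fails at `y = 0`, where `0 ^ η = 0`.
  have hgrowth₁ (r : ℝ) (hr : 0 < r) := volume_setOf_one_add_rho_le_le hl hL hr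
  obtain ⟨C₁, hC₁, h₁⟩ := exists_setLIntegral_rpow_le_of_le hgrowth rho_nonneg
    ENNReal.toReal_nonneg hξ₀ hξ
  obtain ⟨C₂, hC₂, h₂⟩ := exists_setLIntegral_rpow_le_of_le hgrowth₁
    (fun y => by linarith [rho_nonneg (l := l) y]) ENNReal.toReal_nonneg hη₀ hη
  obtain ⟨C₃, hC₃, h₃⟩ := exists_setLIntegral_rpow_le_of_lt (θ := ξ + η) hgrowth₁
    ENNReal.toReal_nonneg (by linarith) hξη
  set s := ξ + η + gnorm l
  refine ⟨C₁ / 2 ^ s + C₂ * 2 ^ (η + gnorm l) / 2 ^ ξ + C₃ * 2 ^ s / 2 ^ ξ + 1, by positivity,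
    fun x => ?_⟩
  set R := 1 + rho l x
  have hRs : 0 ≤ R ^ s := Real.rpow_nonneg (by linarith [rho_nonneg (l := l) x]) _
  set F := fun y => ENNReal.ofReal (rho l (x - y) ^ ξ * (1 + rho l y) ^ η)
  calc ∫⁻ y, F y
      ≤ (∫⁻ y in {y | rho l (x - y) ≤ R / 2}, F y)
        + (∫⁻ y in {y | R / 2 < rho l (x - y) ∧ 1 + rho l y ≤ 2 * R}, F y)
        + ∫⁻ y in {y | 2 * R < 1 + rho l y}, F y := by
        refine lintegral_le_setLIntegral_add_add (fun y _ => ?_) F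
        by_cases h₁ : rho l (x - y) ≤ R / 2
        · exact Or.inl (Or.inl h₁)
        by_cases h₂ : 1 + rho l y ≤ 2 * R
        · exact Or.inl (Or.inr ⟨not_le.1 h₁, h₂⟩)
        · exact Or.inr (not_le.1 h₂)
    _ ≤ ENNReal.ofReal (C₁ / 2 ^ s * R ^ s)
        + ENNReal.ofReal (C₂ * 2 ^ (η + gnorm l) / 2 ^ ξ * R ^ s)
        + ENNReal.ofReal (C₃ * 2 ^ s / 2 ^ ξ * R ^ s) := by
        gcongr
        · exact setLIntegral_kernel_near_le hL hη₀.le h₁ x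
        · exact setLIntegral_kernel_middle_le hξ₀.le h₂ x
        · exact setLIntegral_kernel_far_le hL hξ₀.le h₃ x
    _ ≤ ENNReal.ofReal ((C₁ / 2 ^ s + C₂ * 2 ^ (η + gnorm l) / 2 ^ ξ + C₃ * 2 ^ s / 2 ^ ξ + 1)
          * R ^ s) := by
        rw [← ENNReal.ofReal_add (by positivity) (by positivity),
          ← ENNReal.ofReal_add (by positivity) (by positivity)]
        exact ENNReal.ofReal_le_ofReal (by nlinarith)

/-- Lemma 6.1: if `ξ+‖γ‖ > 0`, `η+‖γ‖ > 0` and `ξ+η+‖γ‖ < 0` then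
`K(x,ξ,η) = ∫ ρ(x-y)^ξ (1+ρ(y))^η dy` is finite with
`K(x,ξ,η) ≤ C(ξ,η,ℓ̲)(1+ρ(x))^{ξ+η+‖γ‖}`. -/
theorem stmt15 (n : ℕ) (hn : 0 < n) (l : Fin n → ℕ) (hl : ∀ k, 0 < l k)
    (ξ η : ℝ) (hξ : 0 < ξ + gnorm l) (hη : 0 < η + gnorm l) (hξη : ξ + η + gnorm l < 0) :
    ∃ C : ℝ, 0 < C ∧ ∀ x : Fin n → ℝ,
      Integrable (fun y : Fin n → ℝ => rho l (x - y) ^ ξ * (1 + rho l y) ^ η) volume ∧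
      (∫ y : Fin n → ℝ, rho l (x - y) ^ ξ * (1 + rho l y) ^ η)
        ≤ C * (1 + rho l x) ^ (ξ + η + gnorm l) := by
  obtain ⟨K, hK, hbound⟩ := exists_lintegral_kernel_le hl (lmax_pos hn hl) hξ hη hξη
  refine ⟨K, hK, fun x => integrable_and_integral_le_of_lintegral_le (by fun_prop)
    (fun y => ?_) ?_ (hbound x)⟩
  · exact mul_nonneg (Real.rpow_nonneg (rho_nonneg _) _)
      (Real.rpow_nonneg (by linarith [rho_nonneg (l := l) y]) _)
  · exact mul_nonneg hK.le (Real.rpow_nonneg (by linarith [rho_nonneg (l := l) x]) _)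

end Semielliptic
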